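/- For any permutation w and integers n ≥ k ≥ 1, the Schubert polynomial of 1^n × w with the variables x_{k+1}, x_{k+2}, … set to 0 equals the Stanley symmetric polynomial S_w(x_1, …, x_k) in k variables. -/

import Mathlib

open Equiv MvPolynomial

/-- The simple transposition `sᵢ` interchanging `i` and `i + 1`. -/
def simpleT (i : ℕ) : Equiv.Perm ℕ := Equiv.swap i (i + 1)

/-- A permutation of the positive integers: it fixes `0` and all but finitely many values. -/
def IsPermOfPos (w : Equiv.Perm ℕ) : Prop :=
  w 0 = 0 ∧ ∃ N, ∀ i, N < i → w i = i

/-- The Coxeter length of `w`, i.e. the number of inversions among positions `≥ 1`. -/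
noncomputable def permLen (w : Equiv.Perm ℕ) : ℕ :=
  Set.ncard {p : ℕ × ℕ | 1 ≤ p.1 ∧ p.1 < p.2 ∧ w p.2 < w p.1}

/-- `ρ` is a reduced expression for `w`, recorded left-to-right as `(i_ℓ, …, i_1)`,
so that `w = s_{i_ℓ} ⋯ s_{i_1}` and the length of `ρ` is the Coxeter length of `w`. -/
def IsReducedWord (w : Equiv.Perm ℕ) (ρ : List ℕ) : Prop :=
  (∀ i ∈ ρ, 1 ≤ i) ∧ (ρ.map simpleT).prod = w ∧ ρ.length = permLen w

/-- `α` is a `ρ`-compatible sequence.  Here, following the paper, the entries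
of the reduced expression `ρ = (i_ℓ, …, i_1)` are indexed from the right,
i.e. `ρ_j = i_j`, so the conditions are stated for `ρ.reverse`. -/
def IsCompatible (ρ α : List ℕ) : Prop :=
  α.length = ρ.length ∧
  (∀ j, j < α.length → 1 ≤ α.getD j 0) ∧
  (∀ j, j + 1 < α.length → α.getD j 0 ≤ α.getD (j + 1) 0) ∧
  (∀ j, j + 1 < α.length →
    ρ.reverse.getD j 0 < ρ.reverse.getD (j + 1) 0 → α.getD j 0 < α.getD (j + 1) 0) ∧
  (∀ j, j < α.length → α.getD j 0 ≤ ρ.reverse.getD j 0)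

/-- The Schubert polynomial `𝔖_w`, as the generating function of compatible sequences. -/
noncomputable def SchubertPoly (w : Equiv.Perm ℕ) : MvPolynomial ℕ ℤ :=
  ∑ᶠ ρ ∈ {ρ : List ℕ | IsReducedWord w ρ},
    ∑ᶠ α ∈ {α : List ℕ | IsCompatible ρ α}, (α.map X).prod

/-- `flatten a` removes the zero parts of the weak composition `a`. -/
def flat (a : List ℕ) : List ℕ := a.filter (· ≠ 0)

/-- `Refines β α` : the strong composition `α` is obtained from `β` by summing
consecutive (nonempty) blocks of parts. -/
def Refines (β α : List ℕ) : Prop :=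
  ∃ L : List (List ℕ), (∀ l ∈ L, l ≠ []) ∧ L.flatten = β ∧ L.map List.sum = α

/-- The monomial `x_1^{b_1} ⋯ x_n^{b_n}` associated to a weak composition `b` of length `n`. -/
noncomputable def wcMonomial (b : List ℕ) : MvPolynomial ℕ ℤ :=
  ((List.range b.length).map fun j => X (j + 1) ^ b.getD j 0).prod

/-- `Dominates b a` : `b ≥ a`, i.e. `b_1 + ⋯ + b_k ≥ a_1 + ⋯ + a_k` for all `k`. -/
def Dominates (b a : List ℕ) : Prop := ∀ k, (a.take k).sum ≤ (b.take k).sum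

/-- The fundamental slide polynomial `𝔉_a` of a weak composition `a`. -/
noncomputable def fundSlide (a : List ℕ) : MvPolynomial ℕ ℤ :=
  ∑ᶠ b ∈ {b : List ℕ | b.length = a.length ∧ Dominates b a ∧ Refines (flat b) (flat a)},
    wcMonomial b

/-- The fundamental slide polynomial extended by `𝔉_∅ = 0` (`none` plays the role of `∅`). -/
noncomputable def fundSlideO : Option (List ℕ) → MvPolynomial ℕ ℤ
  | none => 0
  | some a => fundSlide a

/-- Gessel's fundamental quasisymmetric polynomial `F_α(x_1, …, x_k)`. -/
noncomputable def fundQuasi (k : ℕ) (α : List ℕ) : MvPolynomial ℕ ℤ :=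
  ∑ᶠ b ∈ {b : List ℕ | b.length = k ∧ Refines (flat b) α}, wcMonomial b

/-- The run decomposition of a word: the maximal increasing runs, leftmost first. -/
def runsOf (ρ : List ℕ) : List (List ℕ) := ρ.splitBy (· < ·)

/-- The strong descent composition `Des(ρ) = (|ρ^{(1)}|, …, |ρ^{(k)}|)`,
where `ρ^{(1)}` is the rightmost run. -/
def strongDes (ρ : List ℕ) : List ℕ := ((runsOf ρ).map List.length).reverse

/-- Helper computing, left-to-right, the pairs `(r_i, |ρ^{(i)}|)` of
Definition 2.3: `r_k` is the first letter of the leftmost run, and each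
subsequent `r_i = min(ρ^{(i)}_1, r_{i+1} - 1)` (computed in `ℤ`). -/
def desPairsAux : Option ℤ → List (List ℕ) → List (ℤ × ℕ)
  | _, [] => []
  | prev, run :: rest =>
    let r : ℤ :=
      match prev with
      | none => (run.headD 0 : ℤ)
      | some p => min ((run.headD 0 : ℤ)) (p - 1)
    (r, run.length) :: desPairsAux (some r) rest

/-- The weak descent composition `des(ρ)`: the weak composition of length `r_k`
with `des(ρ)_{r_i} = |ρ^{(i)}|` and all other parts `0`, provided all `r_i ≥ 1`;
otherwise `none` (i.e. `des(ρ) = ∅` and `ρ` is virtual). -/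
def weakDes (ρ : List ℕ) : Option (List ℕ) :=
  let ps := desPairsAux none (runsOf ρ)
  if ∀ q ∈ ps, 1 ≤ q.1 then
    some ((List.range ((ps.headD (0, 0)).1.toNat)).map fun j =>
      (((ps.find? fun q => q.1 == (j + 1 : ℤ)).map Prod.snd).getD 0))
  else none

/-- The Stanley symmetric polynomial `S_w(x_1, …, x_k)`. -/
noncomputable def StanleyPoly (k : ℕ) (w : Equiv.Perm ℕ) : MvPolynomial ℕ ℤ :=
  ∑ᶠ ρ ∈ {ρ : List ℕ | IsReducedWord w ρ}, fundQuasi k (strongDes ρ)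

/-- Set the variables `x_{k+1}, x_{k+2}, …` to zero. -/
noncomputable def truncVars (k : ℕ) : MvPolynomial ℕ ℤ →ₐ[ℤ] MvPolynomial ℕ ℤ :=
  aeval fun i => if i ≤ k then X i else 0

/-- Set the single variable `x_k` to zero. -/
noncomputable def setVarZero (k : ℕ) : MvPolynomial ℕ ℤ →ₐ[ℤ] MvPolynomial ℕ ℤ :=
  aeval fun i => if i = k then 0 else X i



/-!
Adding `n` to every letter is a bijection from the reduced words of `w` onto those of `1ⁿ × w`:
the inversions of `1ⁿ × w` are those of `w` moved up by `n`, and a reduced word only uses letters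
next to positions where its product has inversions.

For a shifted word `ρ + n` and `k ≤ n`, the bound `α_j ≤ ρ_j + n` on a compatible sequence is
vacuous once `α` only uses `x_1, …, x_k`. The surviving `α` are the weakly increasing words in
`[1, k]` that ascend wherever `ρ` read backwards does. Encoding `α` by its vector `b` of
multiplicities turns the ascents of `α` into the partial sums of `b`, while the partial sums of
`Des(ρ)` are the descents of `ρ`; so the condition says exactly that `flat b` refines `Des(ρ)`,
and the monomial of `α` is the monomial of `b`.
-/

def prefixSums (l : List ℕ) : Set ℕ := Set.range fun m => (l.take m).sum

lemma zero_mem_prefixSums (l : List ℕ) : 0 ∈ prefixSums l := ⟨0, rfl⟩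

lemma sum_mem_prefixSums (l : List ℕ) : l.sum ∈ prefixSums l := ⟨l.length, by simp⟩

lemma mem_prefixSums_cons {c t : ℕ} {l : List ℕ} :
    t ∈ prefixSums (c :: l) ↔ t = 0 ∨ ∃ s ∈ prefixSums l, t = c + s := by
  constructor
  · rintro ⟨_ | m, rfl⟩
    · exact Or.inl rfl
    · exact Or.inr ⟨_, ⟨m, rfl⟩, by simp⟩
  · rintro (rfl | ⟨s, ⟨m, rfl⟩, rfl⟩)
    · exact zero_mem_prefixSums _
    · exact ⟨m + 1, by simp⟩

lemma prefixSums_cons_zero (l : List ℕ) : prefixSums (0 :: l) = prefixSums l := by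
  ext t
  rw [mem_prefixSums_cons]
  constructor
  · rintro (rfl | ⟨s, hs, rfl⟩)
    exacts [zero_mem_prefixSums l, by simpa using hs]
  · exact fun h => Or.inr ⟨t, h, (zero_add t).symm⟩

lemma add_one_mem_prefixSums_cons_add_one {c t : ℕ} {l : List ℕ} (ht : 0 < t) :
    t + 1 ∈ prefixSums ((c + 1) :: l) ↔ t ∈ prefixSums (c :: l) := by
  simp only [mem_prefixSums_cons]
  constructor
  · rintro (h | ⟨s, hs, h⟩)
    exacts [absurd h (by omega), Or.inr ⟨s, hs, by omega⟩]
  · rintro (h | ⟨s, hs, h⟩)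
    exacts [absurd h (by omega), Or.inr ⟨s, hs, by omega⟩]

lemma mem_prefixSums_drop {l : List ℕ} {m t : ℕ} (h : (l.take m).sum + t ∈ prefixSums l) :
    t ∈ prefixSums (l.drop m) := by
  obtain ⟨m', hm'⟩ := h
  dsimp only at hm'
  rcases le_or_gt m' m with hle | hlt
  · obtain rfl : t = 0 := by have := List.monotone_sum_take l hle; dsimp only at this; omega
    exact zero_mem_prefixSums _
  · refine ⟨m' - m, ?_⟩
    rw [← Nat.add_sub_cancel' hlt.le, List.take_add, List.sum_append] at hm'
    dsimp only
    omega

lemma mem_prefixSums_reverse {l : List ℕ} {t : ℕ} :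
    t ∈ prefixSums l.reverse ↔ t ≤ l.sum ∧ l.sum - t ∈ prefixSums l := by
  simp only [prefixSums, Set.mem_range, List.take_reverse, List.sum_reverse]
  constructor
  · rintro ⟨m, rfl⟩
    have := List.sum_take_add_sum_drop l (l.length - m)
    exact ⟨by omega, l.length - m, by omega⟩
  · rintro ⟨ht, m, hm⟩
    refine ⟨l.length - m, ?_⟩
    have := List.sum_take_add_sum_drop l m
    rcases le_or_gt m l.length with hle | hlt
    · rw [Nat.sub_sub_self hle]
      omega
    · rw [List.take_of_length_le hlt.le] at hm
      simp only [Nat.sub_eq_zero_of_le hlt.le, tsub_zero, List.drop_length, List.sum_nil]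
      omega

lemma sum_flat (l : List ℕ) : (flat l).sum = l.sum := by
  induction l with
  | nil => rfl
  | cons x l ih => by_cases hx : x = 0 <;> simp [flat, hx, ← ih]

lemma prefixSums_flat (l : List ℕ) : prefixSums (flat l) = prefixSums l := by
  induction l with
  | nil => rfl
  | cons x l ih =>
    by_cases hx : x = 0
    · rw [hx, show flat (0 :: l) = flat l by simp [flat], prefixSums_cons_zero, ih]
    · ext t
      rw [show flat (x :: l) = x :: flat l by simp [flat, hx], mem_prefixSums_cons,
        mem_prefixSums_cons, ih]

lemma ne_zero_of_mem_flat {l : List ℕ} {x : ℕ} (hx : x ∈ flat l) : x ≠ 0 := by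
  simpa using (List.mem_filter.mp hx).2

lemma Refines.sum_eq {β γ : List ℕ} (h : Refines β γ) : β.sum = γ.sum := by
  obtain ⟨L, -, rfl, rfl⟩ := h
  exact List.sum_flatten

lemma Refines.prefixSums_subset {β γ : List ℕ} (h : Refines β γ) :
    prefixSums γ ⊆ prefixSums β := by
  obtain ⟨L, -, rfl, rfl⟩ := h
  rintro t ⟨m, rfl⟩
  refine ⟨(L.take m).flatten.length, ?_⟩
  dsimp only
  have hsplit : L.flatten = (L.take m).flatten ++ (L.drop m).flatten := by
    rw [← List.flatten_append, List.take_append_drop]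
  rw [← List.map_take, ← List.sum_flatten, hsplit, List.take_left]

lemma refines_of_prefixSums_subset {β γ : List ℕ} (hβ : ∀ x ∈ β, x ≠ 0)
    (hγ : ∀ x ∈ γ, x ≠ 0) (hsum : β.sum = γ.sum) (hsub : prefixSums γ ⊆ prefixSums β) :
    Refines β γ := by
  induction γ generalizing β with
  | nil =>
    obtain rfl : β = [] := by
      rcases β with _ | ⟨x, β⟩
      · rfl
      · exact absurd (List.sum_eq_zero_iff.mp hsum x (by simp)) (hβ x (by simp))
    exact ⟨[], by simp, rfl, rfl⟩
  | cons g γ ih =>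
    obtain ⟨m, hm⟩ : g ∈ prefixSums β := hsub ⟨1, by simp⟩
    dsimp only at hm
    have hrest : Refines (β.drop m) γ := by
      refine ih (fun x hx => hβ x (List.mem_of_mem_drop hx)) (fun x hx => hγ x (by simp [hx]))
        ?_ fun s hs => mem_prefixSums_drop ?_
      · have := List.sum_take_add_sum_drop β m
        simp only [List.sum_cons] at hsum
        omega
      · exact hm ▸ hsub (mem_prefixSums_cons.mpr (Or.inr ⟨s, hs, rfl⟩))
    obtain ⟨L, hLne, hLflat, hLsum⟩ := hrest
    refine ⟨β.take m :: L, ?_, by simp [hLflat], by simp [hLsum, hm]⟩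
    rintro l (_ | ⟨_, hl⟩)
    · rintro hnil
      exact hγ g (by simp) (by simp [← hm, hnil])
    · exact hLne l hl

lemma refines_iff {β γ : List ℕ} (hβ : ∀ x ∈ β, x ≠ 0) (hγ : ∀ x ∈ γ, x ≠ 0) :
    Refines β γ ↔ β.sum = γ.sum ∧ prefixSums γ ⊆ prefixSums β :=
  ⟨fun h => ⟨h.sum_eq, h.prefixSums_subset⟩,
    fun h => refines_of_prefixSums_subset hβ hγ h.1 h.2⟩

section SplitBy

variable {α : Type*} {r : α → α → Bool}

lemma splitBy_cons_cons_of_false {a b : α} (l : List α) (h : r a b = false) :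
    (a :: b :: l).splitBy r = [a] :: (b :: l).splitBy r := by
  have := List.splitBy_append_cons (l := [a]) (a := b) (r := r) l (by simpa using h)
  simpa [List.splitBy_of_isChain] using this

lemma splitBy_cons_cons_of_true {a b : α} (l : List α) (h : r a b = true) :
    (a :: b :: l).splitBy r = ((b :: l).splitBy r).modifyHead (a :: ·) := by
  obtain ⟨hflat, hnil, hchain, hlink⟩ := List.splitBy_eq_iff.mp (rfl : (b :: l).splitBy r = _)
  rcases hG : (b :: l).splitBy r with _ | ⟨g, gs⟩
  · simp at hG
  rw [hG] at hflat hnil hchain hlink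
  have hg : g ≠ [] := fun h => hnil (h ▸ List.mem_cons_self)
  obtain ⟨g', rfl⟩ : ∃ g', g = b :: g' := by
    rcases g with _ | ⟨c, g'⟩
    · exact absurd rfl hg
    · exact ⟨g', by simp_all⟩
  rw [List.modifyHead_cons, List.splitBy_eq_iff]
  refine ⟨by simpa using hflat, by simpa using hnil, ?_, ?_⟩
  · rintro m (_ | ⟨_, hm⟩)
    · exact List.isChain_cons_cons.mpr ⟨h, hchain _ List.mem_cons_self⟩
    · exact hchain m (List.mem_cons_of_mem _ hm)
  · rcases gs with _ | ⟨g₂, gs⟩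
    · exact List.isChain_singleton _
    · obtain ⟨⟨ha, hb, hlast⟩, htail⟩ := List.isChain_cons_cons.mp hlink
      refine List.isChain_cons_cons.mpr ⟨⟨by simp, hb, ?_⟩, htail⟩
      simpa [List.getLast_cons] using hlast

lemma mem_prefixSums_map_length_splitBy (r : α → α → Bool) {l : List α} {t : ℕ} (h0 : 0 < t)
    (ht : t < l.length) :
    t ∈ prefixSums ((l.splitBy r).map List.length) ↔ r (l[t - 1]'(by omega)) l[t] = false := by
  induction l generalizing t with
  | nil => simp at ht
  | cons a l ih =>
    rcases l with _ | ⟨b, l⟩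
    · rw [List.length_singleton] at ht
      omega
    obtain rfl | ⟨u, rfl⟩ : t = 1 ∨ ∃ u, t = u + 2 := by
      rcases t with _ | _ | u <;> simp_all
    · show 1 ∈ _ ↔ r a b = false
      cases hab : r a b
      · simp [splitBy_cons_cons_of_false l hab, mem_prefixSums_cons, zero_mem_prefixSums]
      · rcases hG : (b :: l).splitBy r with _ | ⟨g, gs⟩
        · simp at hG
        have hg := List.length_pos_iff.mpr
          (List.ne_nil_of_mem_splitBy (hG ▸ List.mem_cons_self : g ∈ (b :: l).splitBy r))
        simp only [splitBy_cons_cons_of_true l hab, hG, List.modifyHead_cons, List.map_cons,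
          List.length_cons, mem_prefixSums_cons, one_ne_zero, false_or, Bool.true_eq_false,
          iff_false, not_exists, not_and]
        omega
    · have hu : u + 1 < (b :: l).length := by simpa using ht
      have ih' : u + 1 ∈ prefixSums (((b :: l).splitBy r).map List.length) ↔
          r (b :: l)[u] (b :: l)[u + 1] = false := ih (by omega) hu
      show _ ↔ r (b :: l)[u] (b :: l)[u + 1] = false
      rw [← ih']
      cases hab : r a b
      · rw [splitBy_cons_cons_of_false l hab, List.map_cons, List.length_singleton,
          add_one_mem_prefixSums_cons_add_one (by omega), prefixSums_cons_zero]
      · rcases hG : (b :: l).splitBy r with _ | ⟨g, gs⟩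
        · simp at hG
        rw [splitBy_cons_cons_of_true l hab, hG, List.modifyHead_cons, List.map_cons,
          List.map_cons, List.length_cons, add_one_mem_prefixSums_cons_add_one (by omega)]

end SplitBy

/-- `0` is never an ascent, since `l[0 - 1]` is `l[0]`. -/
def ascents (l : List ℕ) : Set ℕ := {t | ∃ h : t < l.length, l[t - 1] < l[t]}

lemma mem_ascents_iff {l : List ℕ} {t : ℕ} :
    t ∈ ascents l ↔ ∃ h : t < l.length, 0 < t ∧ l[t - 1] < l[t] := by
  refine ⟨fun ⟨ht, h⟩ => ⟨ht, Nat.pos_of_ne_zero ?_, h⟩, fun ⟨ht, _, h⟩ => ⟨ht, h⟩⟩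
  rintro rfl
  exact lt_irrefl _ h

lemma sum_strongDes (ρ : List ℕ) : (strongDes ρ).sum = ρ.length := by
  rw [strongDes, List.sum_reverse, runsOf, ← List.length_flatten, List.flatten_splitBy]

lemma ne_zero_of_mem_strongDes {ρ : List ℕ} {c : ℕ} (h : c ∈ strongDes ρ) : c ≠ 0 := by
  simp only [strongDes, runsOf, List.mem_reverse, List.mem_map] at h
  obtain ⟨g, hg, rfl⟩ := h
  exact List.length_pos_iff.mpr (List.ne_nil_of_mem_splitBy hg) |>.ne'

/-- Runs break where `ρ` does not ascend, which are descents as neighbours differ; `Des(ρ)` lists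
the runs from the right. -/
lemma prefixSums_strongDes {ρ : List ℕ} (hρ : ρ.IsChain (· ≠ ·)) :
    prefixSums (strongDes ρ) = insert 0 (insert ρ.length (ascents ρ.reverse)) := by
  ext t
  have hsum := sum_strongDes ρ
  rw [strongDes, List.sum_reverse] at hsum
  rw [strongDes, mem_prefixSums_reverse, hsum, Set.mem_insert_iff, Set.mem_insert_iff,
    mem_ascents_iff]
  rcases Nat.lt_trichotomy t ρ.length with hlt | rfl | hgt
  · rcases Nat.eq_zero_or_pos t with rfl | h0
    · simpa using hsum ▸ sum_mem_prefixSums _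
    rw [runsOf, mem_prefixSums_map_length_splitBy _ (by omega) (by omega)]
    have hne := List.isChain_iff_getElem.mp hρ (ρ.length - t - 1) (by omega)
    have e1 : ρ.length - t - 1 + 1 = ρ.length - t := by omega
    have e2 : ρ.length - 1 - (t - 1) = ρ.length - t := by omega
    have e3 : ρ.length - 1 - t = ρ.length - t - 1 := by omega
    simp only [e1] at hne
    simp only [List.getElem_reverse, e2, e3, List.length_reverse, decide_eq_false_iff_not,
      not_lt]
    constructor
    · rintro ⟨-, h⟩
      exact Or.inr (Or.inr ⟨hlt, h0, lt_of_le_of_ne h (Ne.symm hne)⟩)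
    · rintro (h | h | ⟨_, _, h⟩)
      · omega
      · omega
      · exact ⟨hlt.le, h.le⟩
  · simp [zero_mem_prefixSums]
  · simp only [List.length_reverse]
    constructor
    · rintro ⟨h, -⟩
      omega
    · rintro (h | h | ⟨h, -⟩) <;> omega

def countVec (k : ℕ) (α : List ℕ) : List ℕ := (List.range k).map fun j => α.count (j + 1)

def ofCountVec (b : List ℕ) : List ℕ :=
  ((List.range b.length).map fun j => List.replicate (b.getD j 0) (j + 1)).flatten

lemma length_countVec (k : ℕ) (α : List ℕ) : (countVec k α).length = k := by simp [countVec]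

lemma countP_le_add_one (α : List ℕ) (m : ℕ) :
    α.countP (· ≤ m + 1) = α.countP (· ≤ m) + α.count (m + 1) := by
  induction α with
  | nil => rfl
  | cons x α ih =>
    simp only [List.countP_cons, List.count_cons, ih, decide_eq_true_eq, beq_iff_eq]
    split_ifs <;> omega

lemma sum_take_countVec {k : ℕ} {α : List ℕ} (hpos : ∀ x ∈ α, 1 ≤ x) (hle : ∀ x ∈ α, x ≤ k)
    (m : ℕ) : ((countVec k α).take m).sum = α.countP (· ≤ m) := by
  have hcount : ∀ m, ((List.range m).map fun j => α.count (j + 1)).sum = α.countP (· ≤ m) := by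
    intro m
    induction m with
    | zero =>
      refine (List.countP_eq_zero.mpr fun x hx => ?_).symm
      simpa using Nat.one_le_iff_ne_zero.mp (hpos x hx)
    | succ m ih => simp [List.range_succ, ih, countP_le_add_one]
  rw [countVec, ← List.map_take, List.take_range, hcount]
  refine List.countP_congr fun x hx => ?_
  have := hle x hx
  simp only [decide_eq_true_eq]
  omega

lemma countP_le_le_iff {α : List ℕ} (hs : α.SortedLE) {m t : ℕ} (ht : t < α.length) :
    α.countP (· ≤ m) ≤ t ↔ m < α[t] := by
  constructor
  · intro hcount
    by_contra! hm
    have htake : (α.take (t + 1)).countP (· ≤ m) = t + 1 := by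
      rw [List.countP_eq_length.mpr, List.length_take_of_le ht]
      intro x hx
      obtain ⟨i, hi, rfl⟩ := List.mem_iff_getElem.mp hx
      simp only [List.length_take_of_le ht, List.getElem_take] at hi ⊢
      exact decide_eq_true (le_trans (hs.getElem_le_getElem_of_le (by omega)) hm)
    have := (List.take_sublist (t + 1) α).countP_le (p := (· ≤ m))
    omega
  · intro hm
    have hdrop : (α.drop t).countP (· ≤ m) = 0 := by
      refine List.countP_eq_zero.mpr fun x hx => ?_
      obtain ⟨i, hi, rfl⟩ := List.mem_iff_getElem.mp hx
      simp only [List.getElem_drop, decide_eq_true_eq, not_le]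
      exact lt_of_lt_of_le hm (hs.getElem_le_getElem_of_le (by omega))
    rw [← List.take_append_drop t α, List.countP_append, hdrop, add_zero]
    exact List.countP_le_length.trans (List.length_take_le t α)

lemma prefixSums_countVec {k : ℕ} {α : List ℕ} (hs : α.SortedLE) (hpos : ∀ x ∈ α, 1 ≤ x)
    (hle : ∀ x ∈ α, x ≤ k) :
    prefixSums (countVec k α) = insert 0 (insert α.length (ascents α)) := by
  have hP : prefixSums (countVec k α) = Set.range fun m => α.countP (· ≤ m) := by
    simp only [prefixSums, sum_take_countVec hpos hle]
  ext t
  rw [hP, Set.mem_range, Set.mem_insert_iff, Set.mem_insert_iff, mem_ascents_iff]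
  constructor
  · rintro ⟨m, rfl⟩
    by_cases hlen : α.countP (· ≤ m) < α.length
    · rcases Nat.eq_zero_or_pos (α.countP (· ≤ m)) with h0 | h0
      · exact Or.inl h0
      refine Or.inr (Or.inr ⟨hlen, h0, ?_⟩)
      have h1 := (countP_le_le_iff hs hlen).mp le_rfl
      have h2 := (countP_le_le_iff hs (m := m) (t := α.countP (· ≤ m) - 1) (by omega)).not.mp
        (by omega)
      omega
    · exact Or.inr (Or.inl (le_antisymm List.countP_le_length (not_lt.mp hlen)))
  · rintro (rfl | rfl | ⟨ht, h0, hasc⟩)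
    · refine ⟨0, List.countP_eq_zero.mpr fun x hx => ?_⟩
      simpa using Nat.one_le_iff_ne_zero.mp (hpos x hx)
    · exact ⟨k, List.countP_eq_length.mpr fun x hx => decide_eq_true (hle x hx)⟩
    · refine ⟨α[t - 1], le_antisymm ((countP_le_le_iff hs ht).mpr hasc) ?_⟩
      have := (countP_le_le_iff hs (m := α[t - 1]) (t := t - 1) (by omega)).not.mpr (lt_irrefl _)
      omega

lemma mem_ofCountVec {b : List ℕ} {x : ℕ} (hx : x ∈ ofCountVec b) : 1 ≤ x ∧ x ≤ b.length := by
  simp only [ofCountVec, List.mem_flatten, List.mem_map, List.mem_range] at hx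
  obtain ⟨_, ⟨j, hj, rfl⟩, hx⟩ := hx
  have := List.eq_of_mem_replicate hx
  omega

lemma length_ofCountVec (b : List ℕ) : (ofCountVec b).length = b.sum := by
  simp only [ofCountVec, List.length_flatten, List.map_map, Function.comp_def,
    List.length_replicate]
  congr 1
  exact List.ext_getElem (by simp) fun j _ h => by simp [List.getElem?_eq_getElem h]

lemma sortedLE_ofCountVec (b : List ℕ) : (ofCountVec b).SortedLE := by
  refine List.sortedLE_iff_pairwise.mpr (List.pairwise_flatten.mpr ⟨?_, ?_⟩)
  · simp only [List.mem_map]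
    rintro _ ⟨j, -, rfl⟩
    exact (List.sortedLE_replicate _).pairwise
  · refine List.pairwise_lt_range.map _ fun i j hij x hx y hy => ?_
    rw [List.eq_of_mem_replicate hx, List.eq_of_mem_replicate hy]
    omega

lemma count_ofCountVec (b : List ℕ) {j : ℕ} (hj : j < b.length) :
    (ofCountVec b).count (j + 1) = b[j] := by
  rw [ofCountVec, List.count_flatten, List.map_map,
    List.sum_map_eq_nsmul_single j _ fun i hij _ => ?_,
    List.count_eq_one_of_mem List.nodup_range (List.mem_range.mpr hj)]
  · simp [List.getElem?_eq_getElem hj]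
  · simp [List.count_replicate, hij]

lemma countVec_ofCountVec (b : List ℕ) : countVec b.length (ofCountVec b) = b :=
  List.ext_getElem (length_countVec _ _) fun j h _ => by
    simp only [countVec, List.getElem_map, List.getElem_range]
    exact count_ofCountVec b (by simpa [length_countVec] using h)

lemma ofCountVec_countVec {k : ℕ} {α : List ℕ} (hs : α.SortedLE) (hpos : ∀ x ∈ α, 1 ≤ x)
    (hle : ∀ x ∈ α, x ≤ k) : ofCountVec (countVec k α) = α := by
  refine List.Perm.eq_of_sortedLE (sortedLE_ofCountVec _) hs (List.perm_iff_count.mpr ?_)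
  rintro (_ | m)
  · rw [List.count_eq_zero.mpr fun h => by simpa using (mem_ofCountVec h).1,
      List.count_eq_zero.mpr fun h => by simpa using hpos 0 h]
  · by_cases hm : m < k
    · rw [count_ofCountVec _ (by simpa [length_countVec] using hm)]
      simp [countVec]
    · rw [List.count_eq_zero.mpr fun h => by
          have := (mem_ofCountVec h).2; rw [length_countVec] at this; omega,
        List.count_eq_zero.mpr fun h => by have := hle _ h; omega]

lemma map_X_prod_ofCountVec (b : List ℕ) :
    ((ofCountVec b).map (X : ℕ → MvPolynomial ℕ ℤ)).prod = wcMonomial b := by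
  simp only [ofCountVec, wcMonomial, List.map_flatten, List.prod_flatten, List.map_map,
    Function.comp_def, List.map_replicate, List.prod_replicate]

def inversions (v : Perm ℕ) : Set (ℕ × ℕ) := {p | p.1 < p.2 ∧ v p.2 < v p.1}

lemma permLen_eq_ncard_inversions {v : Perm ℕ} (h0 : v 0 = 0) :
    permLen v = (inversions v).ncard := by
  refine congrArg Set.ncard (Set.ext fun ⟨p, q⟩ => ⟨fun h => h.2, fun ⟨hpq, hv⟩ => ⟨?_, hpq, hv⟩⟩)
  refine Nat.one_le_iff_ne_zero.mpr fun hp => ?_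
  subst hp
  rw [h0] at hv
  exact Nat.not_lt_zero _ hv

lemma inversions_subset_of_forall_lt_apply_eq {v : Perm ℕ} {N : ℕ} (hN : ∀ m, N < m → v m = m) :
    inversions v ⊆ Set.Iic N ×ˢ Set.Iic N := by
  rintro ⟨p, q⟩ ⟨hpq, hv⟩
  dsimp only at hpq hv
  suffices hq : q ≤ N from ⟨(hpq.trans_le hq).le, hq⟩
  by_contra! hq
  rw [hN q hq] at hv
  have hp : p ≤ N := by
    by_contra! hp
    rw [hN p hp] at hv
    omega
  have : v p ≤ N := by
    by_contra! hvp
    have := v.injective (hN _ hvp)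
    omega
  omega

lemma finite_inversions {v : Perm ℕ} {N : ℕ} (hN : ∀ m, N < m → v m = m) :
    (inversions v).Finite :=
  ((Set.finite_Iic N).prod (Set.finite_Iic N)).subset (inversions_subset_of_forall_lt_apply_eq hN)

lemma simpleT_mul_symm_apply (v : Perm ℕ) (i x : ℕ) :
    (simpleT i * v).symm x = v.symm (simpleT i x) := by
  rw [Equiv.symm_apply_eq]
  simp [simpleT]

lemma inversions_simpleT_mul {v : Perm ℕ} {i : ℕ} (h : v.symm i < v.symm (i + 1)) :
    (v.symm i, v.symm (i + 1)) ∉ inversions v ∧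
      inversions (simpleT i * v) = insert (v.symm i, v.symm (i + 1)) (inversions v) := by
  refine ⟨fun ⟨_, hlt⟩ => by simp at hlt, ?_⟩
  ext ⟨p, q⟩
  have hpair : (p, q) = (v.symm i, v.symm (i + 1)) ↔ v p = i ∧ v q = i + 1 := by
    rw [Prod.mk.injEq, Equiv.eq_symm_apply, Equiv.eq_symm_apply]
  simp only [inversions, Set.mem_ofPred_eq, Set.mem_insert_iff, hpair, simpleT,
    Perm.mul_apply, Equiv.swap_apply_def]
  constructor
  · rintro ⟨hpq, hlt⟩
    split_ifs at hlt <;> omega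
  · rintro (⟨hp, hq⟩ | ⟨hpq, hlt⟩)
    · have hpq : p < q := by
        rwa [← hq, ← hp, Equiv.symm_apply_apply, Equiv.symm_apply_apply] at h
      simp [hp, hq, hpq]
    · refine ⟨hpq, ?_⟩
      have hne : ¬ (v p = i + 1 ∧ v q = i) := by
        rintro ⟨hp, hq⟩
        rw [← hp, ← hq, Equiv.symm_apply_apply, Equiv.symm_apply_apply] at h
        omega
      split_ifs <;> omega

lemma inversions_simpleT_mul_subset {v : Perm ℕ} {i : ℕ} (h : v.symm (i + 1) < v.symm i) :
    inversions (simpleT i * v) ⊆ inversions v := by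
  have hvv : simpleT i * (simpleT i * v) = v := by
    rw [← mul_assoc, simpleT, Equiv.swap_mul_self, one_mul]
  have h' : (simpleT i * v).symm i < (simpleT i * v).symm (i + 1) := by
    rwa [simpleT_mul_symm_apply, simpleT_mul_symm_apply, simpleT, Equiv.swap_apply_left,
      Equiv.swap_apply_right]
  have := (inversions_simpleT_mul h').2
  rw [hvv] at this
  exact this ▸ Set.subset_insert _ _

def wordProd (ρ : List ℕ) : Perm ℕ := (ρ.map simpleT).prod

lemma wordProd_cons (a : ℕ) (t : List ℕ) : wordProd (a :: t) = simpleT a * wordProd t := by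
  simp [wordProd]

lemma wordProd_apply_of_forall_ne {ρ : List ℕ} {m : ℕ} (h : ∀ i ∈ ρ, i ≠ m ∧ i + 1 ≠ m) :
    wordProd ρ m = m := by
  induction ρ with
  | nil => rfl
  | cons a t ih =>
    rw [wordProd_cons, Perm.mul_apply, ih fun i hi => h i (List.mem_cons_of_mem a hi)]
    exact Equiv.swap_apply_of_ne_of_ne (h a List.mem_cons_self).1.symm
      (h a List.mem_cons_self).2.symm

lemma wordProd_symm_apply_of_forall_ne {ρ : List ℕ} {m : ℕ} (h : ∀ i ∈ ρ, i ≠ m ∧ i + 1 ≠ m) :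
    (wordProd ρ).symm m = m :=
  (Equiv.symm_apply_eq _).mpr (wordProd_apply_of_forall_ne h).symm

lemma finite_inversions_wordProd (ρ : List ℕ) : (inversions (wordProd ρ)).Finite :=
  finite_inversions (N := ρ.sum + 1) fun m hm => wordProd_apply_of_forall_ne fun i hi => by
    have := List.le_sum_of_mem hi
    omega

lemma ncard_inversions_wordProd_le (ρ : List ℕ) : (inversions (wordProd ρ)).ncard ≤ ρ.length := by
  induction ρ with
  | nil =>
    have : inversions (wordProd []) = ∅ := Set.eq_empty_of_forall_notMem fun p hp => by
      simp only [inversions, wordProd, List.map_nil, List.prod_nil, Perm.one_apply,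
        Set.mem_ofPred_eq] at hp
      omega
    simp [this]
  | cons a t ih =>
    rw [wordProd_cons, List.length_cons]
    rcases lt_trichotomy ((wordProd t).symm a) ((wordProd t).symm (a + 1)) with hlt | heq | hgt
    · rw [(inversions_simpleT_mul hlt).2]
      exact (Set.ncard_insert_le _ _).trans (by omega)
    · exact absurd ((wordProd t).symm.injective heq) (by omega)
    · exact (Set.ncard_le_ncard (inversions_simpleT_mul_subset hgt)
        (finite_inversions_wordProd t)).trans (by omega)

def IsReducedExpr (ρ : List ℕ) : Prop := (inversions (wordProd ρ)).ncard = ρ.length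

lemma IsReducedWord.isReducedExpr {v : Perm ℕ} {ρ : List ℕ} (h0 : v 0 = 0)
    (h : IsReducedWord v ρ) : IsReducedExpr ρ := by
  rw [IsReducedExpr, h.2.2, permLen_eq_ncard_inversions h0, ← h.2.1]
  rfl

namespace IsReducedExpr

variable {a : ℕ} {t ρ : List ℕ}

lemma symm_lt (h : IsReducedExpr (a :: t)) : (wordProd t).symm a < (wordProd t).symm (a + 1) := by
  by_contra! hle
  rcases hle.lt_or_eq with hgt | heq
  · have := Set.ncard_le_ncard (inversions_simpleT_mul_subset hgt) (finite_inversions_wordProd t)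
    have := ncard_inversions_wordProd_le t
    rw [IsReducedExpr, wordProd_cons, List.length_cons] at h
    omega
  · exact absurd ((wordProd t).symm.injective heq) (by omega)

lemma inversions_cons (h : IsReducedExpr (a :: t)) :
    inversions (wordProd (a :: t)) =
      insert ((wordProd t).symm a, (wordProd t).symm (a + 1)) (inversions (wordProd t)) := by
  rw [wordProd_cons, (inversions_simpleT_mul h.symm_lt).2]

lemma tail (h : IsReducedExpr (a :: t)) : IsReducedExpr t := by
  have hcard := h
  rw [IsReducedExpr, h.inversions_cons, Set.ncard_insert_of_notMem
    (inversions_simpleT_mul h.symm_lt).1 (finite_inversions_wordProd t)] at hcard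
  simpa [IsReducedExpr] using hcard

lemma isChain_ne (h : IsReducedExpr ρ) : ρ.IsChain (· ≠ ·) := by
  induction ρ with
  | nil => exact List.isChain_nil
  | cons a t ih =>
    rcases t with _ | ⟨b, t⟩
    · exact List.isChain_singleton a
    refine List.isChain_cons_cons.mpr ⟨?_, ih h.tail⟩
    rintro rfl
    have h₁ := h.symm_lt
    rw [wordProd_cons, simpleT_mul_symm_apply, simpleT_mul_symm_apply, simpleT,
      Equiv.swap_apply_left, Equiv.swap_apply_right] at h₁
    exact absurd h.tail.symm_lt (not_lt.mpr h₁.le)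

lemma pair_mem_inversions (h : IsReducedExpr (a :: t)) :
    ((wordProd t).symm a, (wordProd t).symm (a + 1)) ∈ inversions (wordProd (a :: t)) :=
  h.inversions_cons ▸ Set.mem_insert _ _

/-- A letter `a` at the front of a reduced word creates an inversion on the positions carrying
`a` and `a + 1`; letters never touching those positions leave them fixed. -/
lemma lt_of_mem {n : ℕ} (h : IsReducedExpr ρ) (hn : ∀ p ∈ inversions (wordProd ρ), n < p.1) :
    ∀ i ∈ ρ, n < i := by
  induction ρ with
  | nil => simp
  | cons a t ih =>
    have ht := ih h.tail fun p hp => hn p (h.inversions_cons ▸ Set.mem_insert_of_mem _ hp)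
    refine List.forall_mem_cons.mpr ⟨?_, ht⟩
    have := hn _ h.pair_mem_inversions
    by_contra! ha
    rw [wordProd_symm_apply_of_forall_ne (m := a) fun i hi => by have := ht i hi; omega] at this
    omega

lemma le_of_mem {N : ℕ} (h : IsReducedExpr ρ) (hN : ∀ p ∈ inversions (wordProd ρ), p.2 ≤ N) :
    ∀ i ∈ ρ, i ≤ N := by
  induction ρ with
  | nil => simp
  | cons a t ih =>
    have ht := ih h.tail fun p hp => hN p (h.inversions_cons ▸ Set.mem_insert_of_mem _ hp)
    refine List.forall_mem_cons.mpr ⟨?_, ht⟩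
    have := hN _ h.pair_mem_inversions
    by_contra! ha
    rw [wordProd_symm_apply_of_forall_ne (m := a + 1) fun i hi => by have := ht i hi; omega]
      at this
    omega

end IsReducedExpr

lemma simpleT_add_apply (i n z : ℕ) :
    simpleT (i + n) (n + z) = n + simpleT i z := by
  simp only [simpleT, Equiv.swap_apply_def]
  split_ifs <;> omega

lemma wordProd_map_add_apply {ρ : List ℕ} (hρ : ∀ i ∈ ρ, 1 ≤ i) (n x : ℕ) :
    wordProd (ρ.map (· + n)) x = if x ≤ n then x else n + wordProd ρ (x - n) := by
  induction ρ with
  | nil =>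
    simp only [List.map_nil, wordProd, List.prod_nil, Perm.one_apply]
    split_ifs <;> omega
  | cons i t ih =>
    rw [List.map_cons, wordProd_cons, Perm.mul_apply, ih fun j hj => hρ j (by simp [hj]),
      wordProd_cons, Perm.mul_apply]
    have hi := hρ i List.mem_cons_self
    split_ifs
    · exact Equiv.swap_apply_of_ne_of_ne (by omega) (by omega)
    · exact simpleT_add_apply i n _

lemma wordProd_map_add_eq_iff {w W : Perm ℕ} {n : ℕ} (hw0 : w 0 = 0)
    (hW1 : ∀ i, i ≤ n → W i = i) (hW2 : ∀ i, n < i → W i = n + w (i - n)) {ρ : List ℕ}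
    (hρ : ∀ i ∈ ρ, 1 ≤ i) : wordProd (ρ.map (· + n)) = W ↔ wordProd ρ = w := by
  constructor
  · refine fun h => Equiv.ext fun j => ?_
    rcases Nat.eq_zero_or_pos j with rfl | hj
    · rw [wordProd_apply_of_forall_ne fun i hi => by have := hρ i hi; omega, hw0]
    · have := DFunLike.congr_fun h (n + j)
      rw [wordProd_map_add_apply hρ, if_neg (by omega), hW2 _ (by omega),
        Nat.add_sub_cancel_left] at this
      omega
  · refine fun h => Equiv.ext fun x => ?_
    rw [wordProd_map_add_apply hρ, h]
    split_ifs with hx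
    · exact (hW1 x hx).symm
    · exact (hW2 x (by omega)).symm

lemma inversions_shift {w W : Perm ℕ} {n : ℕ} (hw0 : w 0 = 0)
    (hW1 : ∀ i, i ≤ n → W i = i) (hW2 : ∀ i, n < i → W i = n + w (i - n)) :
    inversions W = Prod.map (· + n) (· + n) '' inversions w := by
  have hpos : ∀ j, 1 ≤ j → 1 ≤ w j := fun j hj => Nat.one_le_iff_ne_zero.mpr fun h =>
    absurd (w.injective (h.trans hw0.symm)) (by omega)
  ext ⟨P, Q⟩
  simp only [inversions, Set.mem_image, Set.mem_ofPred_eq, Prod.exists, Prod.map_apply,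
    Prod.mk.injEq]
  constructor
  · rintro ⟨hPQ, hinv⟩
    have hP : n < P := by
      by_contra! hP
      rw [hW1 P hP] at hinv
      by_cases hQ : Q ≤ n
      · rw [hW1 Q hQ] at hinv
        omega
      · rw [hW2 Q (by omega)] at hinv
        have := hpos (Q - n) (by omega)
        omega
    rw [hW2 P hP, hW2 Q (by omega)] at hinv
    exact ⟨P - n, Q - n, ⟨by omega, by omega⟩, by omega, by omega⟩
  · rintro ⟨p, q, ⟨hpq, hinv⟩, rfl, rfl⟩
    refine ⟨by omega, ?_⟩
    rcases Nat.eq_zero_or_pos p with rfl | hp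
    · rw [hw0] at hinv
      omega
    · rw [hW2 _ (by omega), hW2 _ (by omega), Nat.add_sub_cancel, Nat.add_sub_cancel]
      omega

lemma permLen_shift {w W : Perm ℕ} {n : ℕ} (hw0 : w 0 = 0)
    (hW1 : ∀ i, i ≤ n → W i = i) (hW2 : ∀ i, n < i → W i = n + w (i - n)) :
    permLen W = permLen w := by
  rw [permLen_eq_ncard_inversions (hW1 0 (Nat.zero_le n)), permLen_eq_ncard_inversions hw0,
    inversions_shift hw0 hW1 hW2]
  exact Set.ncard_image_of_injective _ ((add_left_injective n).prodMap (add_left_injective n))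

lemma setOf_isReducedWord_shift {w W : Perm ℕ} {n : ℕ} (hw0 : w 0 = 0)
    (hW1 : ∀ i, i ≤ n → W i = i) (hW2 : ∀ i, n < i → W i = n + w (i - n)) :
    {ρ | IsReducedWord W ρ} = List.map (· + n) '' {ρ | IsReducedWord w ρ} := by
  ext ρ
  constructor
  · intro h
    have hlt : ∀ i ∈ ρ, n < i :=
      (h.isReducedExpr (hW1 0 (Nat.zero_le n))).lt_of_mem fun p hp => by
        rw [show wordProd ρ = W from h.2.1, inversions_shift hw0 hW1 hW2] at hp
        obtain ⟨⟨p, q⟩, hpq, rfl⟩ := hp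
        have : p ≠ 0 := by
          rintro rfl
          exact Nat.not_lt_zero _ (hw0 ▸ hpq.2)
        simp only [Prod.map_apply]
        omega
    have hρ : (ρ.map (· - n)).map (· + n) = ρ := by
      rw [List.map_map]
      conv_rhs => rw [← List.map_id ρ]
      exact List.map_congr_left fun i hi => Nat.sub_add_cancel (hlt i hi).le
    have hpos : ∀ i ∈ ρ.map (· - n), 1 ≤ i := by
      simp only [List.mem_map]
      rintro _ ⟨i, hi, rfl⟩
      have := hlt i hi
      omega
    refine ⟨ρ.map (· - n), ⟨hpos, ?_, ?_⟩, hρ⟩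
    · exact (wordProd_map_add_eq_iff hw0 hW1 hW2 hpos).mp (hρ.symm ▸ h.2.1)
    · rw [List.length_map, h.2.2, permLen_shift hw0 hW1 hW2]
  · rintro ⟨ρ, ⟨hpos, hprod, hlen⟩, rfl⟩
    refine ⟨fun i hi => ?_, (wordProd_map_add_eq_iff hw0 hW1 hW2 hpos).mpr hprod, ?_⟩
    · obtain ⟨j, hj, rfl⟩ := List.mem_map.mp hi
      have := hpos j hj
      omega
    · rw [List.length_map, hlen, permLen_shift hw0 hW1 hW2]

lemma finite_setOf_length_eq_forall_le (m N : ℕ) :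
    {l : List ℕ | l.length = m ∧ ∀ x ∈ l, x ≤ N}.Finite := by
  refine ((List.finite_length_eq (Fin (N + 1)) m).image (List.map Fin.val)).subset ?_
  rintro l ⟨rfl, hl⟩
  exact ⟨l.pmap (fun x hx => ⟨x, Nat.lt_succ_of_le hx⟩) hl, by simp, by simp [List.map_pmap]⟩

lemma finite_setOf_isReducedWord {v : Perm ℕ} {N : ℕ} (h0 : v 0 = 0)
    (hN : ∀ m, N < m → v m = m) : {ρ | IsReducedWord v ρ}.Finite :=
  (finite_setOf_length_eq_forall_le (permLen v) N).subset fun ρ h =>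
    ⟨h.2.2, (h.isReducedExpr h0).le_of_mem fun p hp => by
      rw [show wordProd ρ = v from h.2.1] at hp
      exact (inversions_subset_of_forall_lt_apply_eq hN hp).2⟩

lemma isCompatible_iff {ρ α : List ℕ} :
    IsCompatible ρ α ↔ α.length = ρ.length ∧ (∀ x ∈ α, 1 ≤ x) ∧ α.SortedLE ∧
      ascents ρ.reverse ⊆ ascents α ∧ ∀ j (hj : j < α.length), α[j] ≤ ρ.reverse.getD j 0 := by
  refine and_congr_right fun hlen => ?_
  have hrev : ρ.reverse.length = α.length := by simp [hlen]
  simp only [List.forall_mem_iff_getElem, List.sortedLE_iff_isChain, List.isChain_iff_getElem]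
  refine and_congr ?_ (and_congr ?_ (and_congr ?_ ?_))
  · simp +contextual
  · refine forall_congr' fun j => ⟨fun h hj => ?_, fun h hj => ?_⟩
    · simpa [List.getD_eq_getElem, hj, Nat.lt_of_succ_lt hj] using h hj
    · simpa [List.getD_eq_getElem, hj, Nat.lt_of_succ_lt hj] using h hj
  · simp only [Set.subset_def, mem_ascents_iff]
    refine ⟨fun h t ⟨ht, h0, hasc⟩ => ?_, fun h j hj hasc => ?_⟩
    · obtain ⟨j, rfl⟩ : ∃ j, t = j + 1 := ⟨t - 1, by omega⟩
      have hj : j + 1 < α.length := hrev ▸ ht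
      have := h j hj
      rw [List.getD_eq_getElem _ _ (by omega), List.getD_eq_getElem _ _ ht,
        List.getD_eq_getElem _ _ (by omega), List.getD_eq_getElem _ _ hj] at this
      exact ⟨hj, by omega, this hasc⟩
    · rw [List.getD_eq_getElem _ _ (by omega), List.getD_eq_getElem _ _ (by omega)] at hasc
      obtain ⟨_, _, hlt⟩ := h (j + 1) ⟨by omega, by omega, hasc⟩
      rwa [List.getD_eq_getElem _ _ (by omega), List.getD_eq_getElem _ _ hj]
  · simp +contextual

lemma finite_setOf_isCompatible (ρ : List ℕ) : {α | IsCompatible ρ α}.Finite :=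
  (finite_setOf_length_eq_forall_le ρ.length ρ.sum).subset fun α hα => by
    obtain ⟨hlen, -, -, -, hle⟩ := isCompatible_iff.mp hα
    refine ⟨hlen, List.forall_mem_iff_getElem.mpr fun j hj => (hle j hj).trans ?_⟩
    rw [List.getD_eq_getElem _ _ (by simpa [hlen] using hj)]
    exact List.le_sum_of_mem (List.mem_reverse.mp (List.getElem_mem _))

lemma ascents_map_add (l : List ℕ) (n : ℕ) : ascents (l.map (· + n)) = ascents l := by
  ext t
  simp [ascents]

lemma isCompatible_map_add_iff {ρ α : List ℕ} {k n : ℕ} (hkn : k ≤ n) (hα : ∀ x ∈ α, x ≤ k) :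
    IsCompatible (ρ.map (· + n)) α ↔
      α.length = ρ.length ∧ (∀ x ∈ α, 1 ≤ x) ∧ α.SortedLE ∧ ascents ρ.reverse ⊆ ascents α := by
  rw [isCompatible_iff, ← List.map_reverse, ascents_map_add, List.length_map]
  refine and_congr_right fun hlen => and_congr_right fun _ => and_congr_right fun _ =>
    and_iff_left fun j hj => ?_
  rw [List.getD_eq_getElem _ _ (by simp [← hlen, hj]), List.getElem_map]
  have := hα _ (List.getElem_mem hj)
  omega

lemma sum_countVec {k : ℕ} {α : List ℕ} (hpos : ∀ x ∈ α, 1 ≤ x) (hle : ∀ x ∈ α, x ≤ k) :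
    (countVec k α).sum = α.length := by
  rw [← List.take_of_length_le (length_countVec k α).le, sum_take_countVec hpos hle]
  exact List.countP_eq_length.mpr fun x hx => decide_eq_true (hle x hx)

lemma refines_flat_countVec_iff {ρ α : List ℕ} {k : ℕ} (hρ : ρ.IsChain (· ≠ ·))
    (hlen : α.length = ρ.length) (hs : α.SortedLE) (hpos : ∀ x ∈ α, 1 ≤ x)
    (hle : ∀ x ∈ α, x ≤ k) :
    Refines (flat (countVec k α)) (strongDes ρ) ↔ ascents ρ.reverse ⊆ ascents α := by
  rw [refines_iff (fun _ => ne_zero_of_mem_flat) (fun _ => ne_zero_of_mem_strongDes), sum_flat,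
    sum_strongDes, sum_countVec hpos hle, prefixSums_flat, prefixSums_strongDes hρ,
    prefixSums_countVec hs hpos hle, hlen]
  refine (and_iff_right rfl).trans
    ⟨fun h t ht => ?_, fun h => Set.insert_subset_insert (Set.insert_subset_insert h)⟩
  obtain ⟨htl, h0, -⟩ := mem_ascents_iff.mp ht
  rw [List.length_reverse] at htl
  rcases h (Set.mem_insert_of_mem _ (Set.mem_insert_of_mem _ ht)) with h | h | h
  · omega
  · omega
  · exact h

lemma truncVars_finsum_mem {ι : Type*} (k : ℕ) (f : ι → MvPolynomial ℕ ℤ) {s : Set ι}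
    (hs : s.Finite) : truncVars k (∑ᶠ i ∈ s, f i) = ∑ᶠ i ∈ s, truncVars k (f i) :=
  (truncVars k).toAddMonoidHom.map_finsum_mem f hs

lemma truncVars_X (k i : ℕ) : truncVars k (X i) = if i ≤ k then X i else 0 := by
  simp [truncVars]

lemma truncVars_prod_map_X_of_forall_le {k : ℕ} {α : List ℕ} (h : ∀ x ∈ α, x ≤ k) :
    truncVars k (α.map X).prod = (α.map X).prod := by
  rw [map_list_prod, List.map_map]
  exact congrArg List.prod (List.map_congr_left fun x hx => by simp [truncVars_X, h x hx])

lemma truncVars_prod_map_X_of_lt_mem {k x : ℕ} {α : List ℕ} (hx : x ∈ α) (hk : k < x) :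
    truncVars k (α.map X).prod = 0 := by
  rw [map_list_prod, List.map_map]
  exact List.prod_eq_zero (List.mem_map.mpr ⟨x, hx, by simp [truncVars_X, hk.not_ge]⟩)

lemma truncVars_sum_isCompatible_map_add {ρ : List ℕ} {k n : ℕ} (hkn : k ≤ n)
    (hρ : ρ.IsChain (· ≠ ·)) :
    truncVars k (∑ᶠ α ∈ {α | IsCompatible (ρ.map (· + n)) α}, (α.map X).prod) =
      fundQuasi k (strongDes ρ) := by
  set S := {α | IsCompatible (ρ.map (· + n)) α ∧ ∀ x ∈ α, x ≤ k}
  have hmem : ∀ α ∈ S, α.length = ρ.length ∧ (∀ x ∈ α, 1 ≤ x) ∧ α.SortedLE ∧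
      ascents ρ.reverse ⊆ ascents α := fun α hα => (isCompatible_map_add_iff hkn hα.2).mp hα.1
  have hbij : Set.BijOn (countVec k) S {b | b.length = k ∧ Refines (flat b) (strongDes ρ)} := by
    refine Set.InvOn.bijOn (f' := ofCountVec) ⟨fun α hα => ?_, fun b hb => ?_⟩ (fun α hα => ?_)
      (fun b hb => ?_)
    · obtain ⟨-, hpos, hs, -⟩ := hmem α hα
      exact ofCountVec_countVec hs hpos hα.2
    · rw [← hb.1]
      exact countVec_ofCountVec b
    · obtain ⟨hlen, hpos, hs, hasc⟩ := hmem α hα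
      exact ⟨length_countVec k α, (refines_flat_countVec_iff hρ hlen hs hpos hα.2).mpr hasc⟩
    · obtain ⟨hb, href⟩ := hb
      have hle : ∀ x ∈ ofCountVec b, x ≤ k := fun x hx => hb ▸ (mem_ofCountVec hx).2
      have hpos : ∀ x ∈ ofCountVec b, 1 ≤ x := fun x hx => (mem_ofCountVec hx).1
      have hlen : (ofCountVec b).length = ρ.length := by
        rw [length_ofCountVec, ← sum_flat, href.sum_eq, sum_strongDes]
      have hasc := (refines_flat_countVec_iff hρ hlen (sortedLE_ofCountVec b) hpos hle).mp
        (by rwa [← hb, countVec_ofCountVec])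
      exact ⟨(isCompatible_map_add_iff hkn hle).mpr ⟨hlen, hpos, sortedLE_ofCountVec b, hasc⟩,
        hle⟩
  calc truncVars k (∑ᶠ α ∈ {α | IsCompatible (ρ.map (· + n)) α}, (α.map X).prod)
      = ∑ᶠ α ∈ {α | IsCompatible (ρ.map (· + n)) α}, truncVars k (α.map X).prod :=
        truncVars_finsum_mem k _ (finite_setOf_isCompatible _)
    _ = ∑ᶠ α ∈ S, truncVars k (α.map X).prod := by
        refine finsum_mem_inter_support_eq' _ _ _ fun α hα => ⟨fun h => ⟨h, fun x hx => ?_⟩,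
          And.left⟩
        by_contra! hk
        exact hα (truncVars_prod_map_X_of_lt_mem hx hk)
    _ = ∑ᶠ α ∈ S, (α.map X).prod :=
        finsum_mem_congr rfl fun α hα => truncVars_prod_map_X_of_forall_le hα.2
    _ = fundQuasi k (strongDes ρ) := by
        refine finsum_mem_eq_of_bijOn _ hbij fun α hα => ?_
        obtain ⟨-, hpos, hs, -⟩ := hmem α hα
        rw [← map_X_prod_ofCountVec, ofCountVec_countVec hs hpos hα.2]

theorem schubert_shift_trunc_eq_stanley_general (w : Equiv.Perm ℕ) (hw : IsPermOfPos w)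
    (n k : ℕ) (hkn : k ≤ n)
    (W : Equiv.Perm ℕ)
    (hW1 : ∀ i, i ≤ n → W i = i)
    (hW2 : ∀ i, n < i → W i = n + w (i - n)) :
    truncVars k (SchubertPoly W) = StanleyPoly k w := by
  obtain ⟨hw0, N, hN⟩ := hw
  rw [SchubertPoly, setOf_isReducedWord_shift hw0 hW1 hW2,
    finsum_mem_image (List.map_injective_iff.mpr (add_left_injective n)).injOn,
    truncVars_finsum_mem k _ (finite_setOf_isReducedWord hw0 hN)]
  exact finsum_mem_congr rfl fun ρ hρ =>
    truncVars_sum_isCompatible_map_add hkn (hρ.isReducedExpr hw0).isChain_ne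

/-- For any permutation `w` and integers `n ≥ k ≥ 1`, the Schubert
polynomial of `1^n × w` (the permutation `W` with `W_i = i` for `i ≤ n` and
`W_i = n + w_{i−n}` for `i > n`) with the variables `x_{k+1}, x_{k+2}, …` set to `0`
equals the Stanley symmetric polynomial `S_w(x_1, …, x_k)`. -/
theorem schubert_shift_trunc_eq_stanley (w : Equiv.Perm ℕ) (hw : IsPermOfPos w)
    (n k : ℕ) (hk : 1 ≤ k) (hkn : k ≤ n)
    (W : Equiv.Perm ℕ)
    (hW1 : ∀ i, i ≤ n → W i = i)
    (hW2 : ∀ i, n < i → W i = n + w (i - n)) :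
    truncVars k (SchubertPoly W) = StanleyPoly k w :=
  schubert_shift_trunc_eq_stanley_general w hw n k hkn W hW1 hW2
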